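/- arXiv:1903.00272 — 7 statements merged into one kernel-verified Lean document; each statement's English description precedes it below -/
import Mathlib

section
/- Let B be a finite acyclic simple graph (a forest) and A a subset of its vertices. Then A is closed in B (A ≤* B) if and only if no vertex of B \ A is adjacent to a vertex of A. -/
/-
For `A ⊆ C`, an edge from `b ∉ A` to `A` means that adding `b` to `A` adds one vertex and at
least one edge, so `δ` does not grow. Conversely, if no vertex outside `A` is adjacent to `A`,
the edges of `C` split into those of `A` and those of `D = C \ A`, so `δ(C) ≥ δ(A) + δ(D)`;
and `δ(D) ≥ 1` because the forest induced on the nonempty set `D` lies inside a spanning tree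
of the complete graph on `D`, which has `|D| - 1` edges.
-/

open SimpleGraph

/-- The predimension of a finite set `A` of vertices: `|A| - e(A)`, where `e(A)` is the
number of edges of the induced subgraph on `A`. -/
noncomputable def delta {V : Type*} (G : SimpleGraph V) (A : Finset V) : ℤ :=
  (A.card : ℤ) - (Nat.card (G.induce (A : Set V)).edgeSet : ℤ)

/-- `A` is closed in `B` (`A ≤* B`): `A ⊆ B` and `δ(C) > δ(A)` for every finite `C` with
`A ⊊ C ⊆ B`. -/
def Closed {V : Type*} (G : SimpleGraph V) (A B : Finset V) : Prop :=
  A ⊆ B ∧ ∀ C : Finset V, A ⊂ C → C ⊆ B → delta G A < delta G C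

/-- `A` is weakly closed in `B` (`A ≤ B`). -/
def WClosed {V : Type*} (G : SimpleGraph V) (A B : Finset V) : Prop :=
  A ⊆ B ∧ ∀ C : Finset V, A ⊆ C → C ⊆ B → delta G A ≤ delta G C

/-- `A ≤* M` : `A` is closed in every finite superset inside the graph. -/
def ClosedIn {V : Type*} (G : SimpleGraph V) (A : Finset V) : Prop :=
  ∀ B : Finset V, A ⊆ B → Closed G A B

def WClosedIn {V : Type*} (G : SimpleGraph V) (A : Finset V) : Prop :=
  ∀ B : Finset V, A ⊆ B → WClosed G A B

/-- `(A,B)` is a minimal pair. -/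
def MinPair {V : Type*} (G : SimpleGraph V) (A B : Finset V) : Prop :=
  A ⊆ B ∧ (∀ C : Finset V, A ⊆ C → C ⊂ B → Closed G A C) ∧ ¬ Closed G A B

def WMinPair {V : Type*} (G : SimpleGraph V) (A B : Finset V) : Prop :=
  A ⊆ B ∧ (∀ C : Finset V, A ⊆ C → C ⊂ B → WClosed G A C) ∧ ¬ WClosed G A B

/-- `B` is an intrinsic extension of `A`. -/
def IntrinsicExt {V : Type*} (G : SimpleGraph V) (A B : Finset V) : Prop :=
  A ⊆ B ∧ ∀ C : Finset V, A ⊆ C → C ⊂ B → ¬ Closed G C B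

def WIntrinsicExt {V : Type*} (G : SimpleGraph V) (A B : Finset V) : Prop :=
  A ⊆ B ∧ ∀ C : Finset V, A ⊆ C → C ⊂ B → ¬ WClosed G C B

/-- The closure `cl*_M(N)`. -/
def clStar {V : Type*} (G : SimpleGraph V) (N : Set V) : Set V :=
  {b | ∃ A E : Finset V, (A : Set V) ⊆ N ∧ IntrinsicExt G A E ∧ b ∈ E}

/-- The weak closure `cl_M(N)`. -/
def clWeak {V : Type*} (G : SimpleGraph V) (N : Set V) : Set V :=
  {b | ∃ A E : Finset V, (A : Set V) ⊆ N ∧ WIntrinsicExt G A E ∧ b ∈ E}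

namespace SimpleGraph

variable {V : Type*} {G : SimpleGraph V}

theorem IsAcyclic.card_edgeSet_lt_card [Finite V] [Nonempty V] (hG : G.IsAcyclic) :
    Nat.card G.edgeSet < Nat.card V := by
  obtain ⟨T, hGT, -, hT⟩ := connected_top.exists_isTree_le_of_le_of_isAcyclic le_top hG
  have hcard := (isTree_iff_connected_and_card.mp hT).2
  have hle := Nat.card_mono (Set.toFinite T.edgeSet) (edgeSet_mono hGT)
  omega

theorem image_edgeSet_induce (s : Set V) :
    Sym2.map (↑) '' (G.induce s).edgeSet = G.edgeSet ∩ s.sym2 := by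
  ext e
  constructor
  · rintro ⟨e, he, rfl⟩
    induction e using Sym2.ind with
    | _ u v => exact ⟨he, u.2, v.2⟩
  · induction e using Sym2.ind with
    | _ x y =>
      rintro ⟨hxy, hx, hy⟩
      exact ⟨s(⟨x, hx⟩, ⟨y, hy⟩), hxy, rfl⟩

theorem card_edgeSet_induce (s : Set V) :
    Nat.card (G.induce s).edgeSet = (G.edgeSet ∩ s.sym2).ncard := by
  rw [← image_edgeSet_induce, Set.ncard_image_of_injective _
    (Sym2.map.injective Subtype.val_injective), Nat.card_coe_set_eq]

theorem finite_edgeSet_inter_sym2 (A : Finset V) : (G.edgeSet ∩ (A : Set V).sym2).Finite :=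
  Set.Finite.inter_of_right (by simpa using A.sym2.finite_toSet) _

end SimpleGraph

section Predimension

variable {V : Type*} {G : SimpleGraph V}

lemma delta_eq_card_sub_ncard (A : Finset V) :
    delta G A = A.card - (G.edgeSet ∩ (A : Set V).sym2).ncard := by
  rw [delta, card_edgeSet_induce]

lemma delta_pos_of_isAcyclic {D : Finset V} (hD : D.Nonempty)
    (hD_acyc : (G.induce (D : Set V)).IsAcyclic) : 0 < delta G D := by
  have : Nonempty (D : Set V) := hD.coe_sort
  have hlt := hD_acyc.card_edgeSet_lt_card
  rw [Nat.card_coe_set_eq (D : Set V), Set.ncard_coe_finset] at hlt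
  rw [delta]
  omega

lemma delta_insert_le_of_adj [DecidableEq V] {A : Finset V} {a b : V} (hb : b ∉ A) (ha : a ∈ A)
    (hadj : G.Adj b a) : delta G (insert b A) ≤ delta G A := by
  have hsub : G.edgeSet ∩ (A : Set V).sym2 ⊂ G.edgeSet ∩ (↑(insert b A) : Set V).sym2 := by
    refine (Set.ssubset_iff_of_subset ?_).mpr ⟨s(b, a), ⟨hadj, by simp [ha]⟩, fun h ↦ hb h.2.1⟩
    rintro e ⟨he, heA⟩
    exact ⟨he, Set.mem_sym2_iff_subset.mpr ((Set.mem_sym2_iff_subset.mp heA).trans (by simp))⟩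
  have hlt := Set.ncard_lt_ncard hsub (finite_edgeSet_inter_sym2 _)
  rw [delta_eq_card_sub_ncard, delta_eq_card_sub_ncard, Finset.card_insert_of_notMem hb]
  omega

lemma delta_add_delta_sdiff_le [DecidableEq V] {A C : Finset V} (hAC : A ⊆ C)
    (hno : ∀ b ∈ C \ A, ∀ a ∈ A, ¬ G.Adj b a) :
    delta G A + delta G (C \ A) ≤ delta G C := by
  have hcover : G.edgeSet ∩ (C : Set V).sym2 ⊆
      (G.edgeSet ∩ (A : Set V).sym2) ∪ (G.edgeSet ∩ (↑(C \ A) : Set V).sym2) := by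
    rintro e ⟨he, heC⟩
    induction e using Sym2.ind with
    | _ x y =>
      obtain ⟨hx, hy⟩ := heC
      by_cases hxA : x ∈ A <;> by_cases hyA : y ∈ A
      · exact .inl ⟨he, hxA, hyA⟩
      · exact absurd he.symm (hno y (by simp_all) x hxA)
      · exact absurd he (hno x (by simp_all) y hyA)
      · exact .inr ⟨he, by simp_all, by simp_all⟩
  have hle := (Set.ncard_le_ncard hcover
    ((finite_edgeSet_inter_sym2 _).union (finite_edgeSet_inter_sym2 _))).trans
    (Set.ncard_union_le _ _)
  have hcard := Finset.card_sdiff_add_card_eq_card hAC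
  rw [delta_eq_card_sub_ncard, delta_eq_card_sub_ncard, delta_eq_card_sub_ncard]
  omega

end Predimension

/-- Let `B` be a finite forest and `A ⊆ B`. Then `A` is closed in `B`
(`A ≤* B`) iff no vertex of `B \ A` is adjacent to a vertex of `A`. -/
theorem stmt_2 {V : Type*} [DecidableEq V] (G : SimpleGraph V) (A B : Finset V)
    (hAB : A ⊆ B) (hB : (G.induce (B : Set V)).IsAcyclic) :
    Closed G A B ↔ ∀ b ∈ B \ A, ∀ a ∈ A, ¬ G.Adj b a := by
  constructor
  · rintro ⟨-, hclosed⟩ b hb a ha hadj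
    obtain ⟨hbB, hbA⟩ := Finset.mem_sdiff.mp hb
    exact (delta_insert_le_of_adj hbA ha hadj).not_gt
      (hclosed _ (Finset.ssubset_insert hbA) (Finset.insert_subset hbB hAB))
  · intro hno
    refine ⟨hAB, fun C hAC hCB ↦ ?_⟩
    have hD : (C \ A).Nonempty := Finset.sdiff_nonempty.mpr (not_subset_of_ssubset hAC)
    have hD_acyc : (G.induce ↑(C \ A)).IsAcyclic :=
      hB.embedding (G.induceHomOfLE (Finset.coe_subset.mpr (Finset.sdiff_subset.trans hCB)))
    have hno_C : ∀ b ∈ C \ A, ∀ a ∈ A, ¬ G.Adj b a :=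
      fun b hb ↦ hno b (Finset.sdiff_subset_sdiff hCB le_rfl hb)
    linarith [delta_pos_of_isAcyclic hD hD_acyc, delta_add_delta_sdiff_le hAC.subset hno_C]
end

section
/- Let A ⊆ B be finite forests. If B is an intrinsic extension of A, then there exists a finite chain A = B₀ ⊆ B₁ ⊆ ⋯ ⊆ Bₙ = B such that each (B_{i−1}, B_i) is a minimal pair. -/
open SimpleGraph

theorem closed_refl' {V : Type*} (G : SimpleGraph V) (A : Finset V) : Closed G A A :=
  ⟨subset_rfl, fun C hC hCA => absurd hCA hC.not_subset⟩

theorem aux_chain {V : Type*} [DecidableEq V] (G : SimpleGraph V) :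
    ∀ (k : ℕ) (A B : Finset V), (B \ A).card ≤ k → IntrinsicExt G A B →
      ∃ (n : ℕ) (f : Fin (n + 1) → Finset V),
        f 0 = A ∧ f (Fin.last n) = B ∧
        (∀ i : Fin n, f i.castSucc ⊆ f i.succ) ∧
        ∀ i : Fin n, MinPair G (f i.castSucc) (f i.succ) := by
  classical
  intro k
  induction k with
  | zero =>
    intro A B hcard h
    have hAB : A = B := by
      have he : B \ A = ∅ := Finset.card_eq_zero.mp (Nat.le_zero.mp hcard)
      refine le_antisymm h.1 (fun x hx => ?_)
      by_contra hxA
      exact absurd (Finset.mem_sdiff.mpr ⟨hx, hxA⟩) (by simp [he])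
    exact ⟨0, fun _ => A, rfl, hAB, fun i => i.elim0, fun i => i.elim0⟩
  | succ k ih =>
    intro A B hcard h
    by_cases hAB : A = B
    · exact ⟨0, fun _ => A, rfl, hAB, fun i => i.elim0, fun i => i.elim0⟩
    · have hssub : A ⊂ B := ⟨h.1, fun hBA => hAB (le_antisymm h.1 hBA)⟩
      have hnc : ¬ Closed G A B := h.2 A subset_rfl hssub
      set S := (B.powerset).filter (fun C => A ⊆ C ∧ ¬ Closed G A C) with hS
      have hBS : B ∈ S := by
        rw [hS, Finset.mem_filter, Finset.mem_powerset]
        exact ⟨subset_rfl, h.1, hnc⟩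
      obtain ⟨B₁, hB₁S, hmin⟩ := S.exists_min_image Finset.card ⟨B, hBS⟩
      rw [hS, Finset.mem_filter, Finset.mem_powerset] at hB₁S
      obtain ⟨hB₁B, hAB₁, hncB₁⟩ := hB₁S
      have hminpair : MinPair G A B₁ := by
        refine ⟨hAB₁, fun C hAC hCB₁ => ?_, hncB₁⟩
        by_contra hCnc
        have hCS : C ∈ S := by
          rw [hS, Finset.mem_filter, Finset.mem_powerset]
          exact ⟨hCB₁.subset.trans hB₁B, hAC, hCnc⟩
        exact absurd (Finset.card_lt_card hCB₁) (not_lt.mpr (hmin C hCS))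
      have hAne : A ≠ B₁ := fun e => hncB₁ (e ▸ closed_refl' G A)
      have hAssB₁ : A ⊂ B₁ := ⟨hAB₁, fun hb => hAne (le_antisymm hAB₁ hb)⟩
      have hInt : IntrinsicExt G B₁ B :=
        ⟨hB₁B, fun C hC hCB => h.2 C (hAB₁.trans hC) hCB⟩
      have hcard' : (B \ B₁).card ≤ k := by
        obtain ⟨x, hxB₁, hxA⟩ := Finset.exists_of_ssubset hAssB₁
        have hss : B \ B₁ ⊂ B \ A := by
          refine ⟨Finset.sdiff_subset_sdiff subset_rfl hAB₁, fun hsub => ?_⟩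
          have hx1 : x ∈ B \ A := Finset.mem_sdiff.mpr ⟨hB₁B hxB₁, hxA⟩
          have hx2 := hsub hx1
          exact (Finset.mem_sdiff.mp hx2).2 hxB₁
        have := Finset.card_lt_card hss
        omega
      obtain ⟨m, g, hg0, hglast, hgsub, hgmin⟩ := ih B₁ B hcard' hInt
      refine ⟨m + 1, Fin.cases A g, by simp, ?_, ?_, ?_⟩
      · simp only [← Fin.succ_last, Fin.cases_succ]
        exact hglast
      · intro i
        induction i using Fin.cases with
        | zero =>
          simp only [Fin.castSucc_zero, Fin.cases_zero, ← Fin.succ_zero_eq_one,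
            Fin.cases_succ, hg0]
          exact hAB₁
        | succ j =>
          simp only [← Fin.succ_castSucc, Fin.cases_succ]
          exact hgsub j
      · intro i
        induction i using Fin.cases with
        | zero =>
          simp only [Fin.castSucc_zero, Fin.cases_zero, ← Fin.succ_zero_eq_one,
            Fin.cases_succ, hg0]
          exact hminpair
        | succ j =>
          simp only [← Fin.succ_castSucc, Fin.cases_succ]
          exact hgmin j

/-- Let `A ⊆ B` be finite forests. If `B` is an intrinsic extension of
`A`, then there is a finite chain `A = B₀ ⊆ B₁ ⊆ ⋯ ⊆ Bₙ = B` in which each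
`(Bᵢ₋₁, Bᵢ)` is a minimal pair. -/
theorem stmt_4 {V : Type*} (G : SimpleGraph V) (A B : Finset V)
    (hAB : A ⊆ B) (hB : (G.induce (B : Set V)).IsAcyclic)
    (h : IntrinsicExt G A B) :
    ∃ (n : ℕ) (f : Fin (n + 1) → Finset V),
      f 0 = A ∧ f (Fin.last n) = B ∧
      (∀ i : Fin n, f i.castSucc ⊆ f i.succ) ∧
      ∀ i : Fin n, MinPair G (f i.castSucc) (f i.succ) := by
  haveI := Classical.decEq V
  exact aux_chain G (B \ A).card A B le_rfl h
end

section
/- Let M be a simple graph and A, B₁, B₂ finite sets of vertices of M with A ⊆ B₁ and A ⊆ B₂. If B₁ is an intrinsic extension of A and B₂ is an intrinsic extension of A (with respect to the induced subgraphs of M), then B₁ ∪ B₂ is an intrinsic extension of A. -/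
open SimpleGraph

/-- edges of `G` with all vertices in `s`, as a set of `Sym2 V`. -/
def Es {V : Type*} (G : SimpleGraph V) (s : Set V) : Set (Sym2 V) :=
  Sym2.map (Subtype.val : s → V) '' (G.induce s).edgeSet

lemma mem_Es {V : Type*} (G : SimpleGraph V) (s : Set V) (e : Sym2 V) :
    e ∈ Es G s ↔ e ∈ G.edgeSet ∧ ∀ v ∈ e, v ∈ s := by
  induction e using Sym2.ind with
  | _ a b =>
    constructor
    · rintro ⟨f, hf, hmap⟩
      induction f using Sym2.ind with
      | _ x y =>
        simp only [Sym2.map_pair_eq, Sym2.eq_iff] at hmap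
        have hadj : G.Adj x y := hf
        rcases hmap with ⟨hx, hy⟩ | ⟨hx, hy⟩
        · subst hx; subst hy
          refine ⟨hadj, ?_⟩
          intro v hv
          rw [Sym2.mem_iff] at hv
          rcases hv with rfl | rfl
          · exact x.2
          · exact y.2
        · subst hx; subst hy
          refine ⟨hadj.symm, ?_⟩
          intro v hv
          rw [Sym2.mem_iff] at hv
          rcases hv with rfl | rfl
          · exact y.2
          · exact x.2
    · rintro ⟨hadj, hmem⟩
      have ha : a ∈ s := hmem a (by simp)
      have hb : b ∈ s := hmem b (by simp)
      refine ⟨s(⟨a, ha⟩, ⟨b, hb⟩), ?_, by simp⟩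
      exact hadj

lemma Es_card {V : Type*} (G : SimpleGraph V) (s : Set V) :
    (Es G s).ncard = Nat.card (G.induce s).edgeSet := by
  rw [Es, Set.ncard_image_of_injective _ (Sym2.map.injective Subtype.val_injective)]
  rfl

lemma Es_finite {V : Type*} (G : SimpleGraph V) (A : Finset V) :
    (Es G (A : Set V)).Finite := by
  have : Finite ((A : Set V) : Type _) := A.finite_toSet.to_subtype
  exact (Set.toFinite _).image _

lemma Es_mono {V : Type*} (G : SimpleGraph V) {s t : Set V} (h : s ⊆ t) :
    Es G s ⊆ Es G t := by
  intro e he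
  rw [mem_Es] at he ⊢
  exact ⟨he.1, fun v hv => h (he.2 v hv)⟩

lemma delta_submod {V : Type*} [DecidableEq V] (G : SimpleGraph V) (X Y : Finset V) :
    delta G (X ∪ Y) + delta G (X ∩ Y) ≤ delta G X + delta G Y := by
  have hcard : (X ∪ Y).card + (X ∩ Y).card = X.card + Y.card :=
    Finset.card_union_add_card_inter X Y
  have hE : (Es G X).ncard + (Es G Y).ncard ≤
      (Es G ((X ∪ Y : Finset V) : Set V)).ncard + (Es G ((X ∩ Y : Finset V) : Set V)).ncard := by
    have h1 : (Es G X ∪ Es G Y).ncard + (Es G X ∩ Es G Y).ncard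
        = (Es G X).ncard + (Es G Y).ncard :=
      Set.ncard_union_add_ncard_inter _ _ (Es_finite G X) (Es_finite G Y)
    have h2 : (Es G X ∪ Es G Y).ncard ≤ (Es G ((X ∪ Y : Finset V) : Set V)).ncard := by
      apply Set.ncard_le_ncard _ (Es_finite G (X ∪ Y))
      apply Set.union_subset <;> apply Es_mono <;> intro v hv <;> simp_all
    have h3 : Es G X ∩ Es G Y = Es G ((X ∩ Y : Finset V) : Set V) := by
      ext e
      simp only [Set.mem_inter_iff, mem_Es, Finset.mem_coe, Finset.mem_inter]
      constructor
      · rintro ⟨⟨he, hx⟩, _, hy⟩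
        exact ⟨he, fun v hv => ⟨hx v hv, hy v hv⟩⟩
      · rintro ⟨he, h⟩
        exact ⟨⟨he, fun v hv => (h v hv).1⟩, he, fun v hv => (h v hv).2⟩
    rw [h3] at h1
    omega
  unfold delta
  rw [← Es_card, ← Es_card, ← Es_card, ← Es_card]
  have hc' : ((X ∪ Y).card : ℤ) + ((X ∩ Y).card : ℤ) = (X.card : ℤ) + (Y.card : ℤ) := by
    exact_mod_cast hcard
  have hE' : ((Es G (X : Set V)).ncard : ℤ) + ((Es G (Y : Set V)).ncard : ℤ) ≤
      ((Es G ((X ∪ Y : Finset V) : Set V)).ncard : ℤ) +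
      ((Es G ((X ∩ Y : Finset V) : Set V)).ncard : ℤ) := by
    exact_mod_cast hE
  linarith

lemma closed_inter {V : Type*} [DecidableEq V] (G : SimpleGraph V) {C B B' : Finset V}
    (hB' : B' ⊆ B) (h : Closed G C B) : Closed G (C ∩ B') B' := by
  refine ⟨Finset.inter_subset_right, ?_⟩
  intro F hF hFB'
  have hFC : F ∩ C = C ∩ B' := by
    apply Finset.Subset.antisymm
    · intro x hx
      rw [Finset.mem_inter] at hx ⊢
      exact ⟨hx.2, hFB' hx.1⟩
    · intro x hx
      rw [Finset.mem_inter] at hx ⊢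
      exact ⟨hF.1 (Finset.mem_inter.2 hx), hx.1⟩
  have hCF : C ⊂ F ∪ C := by
    obtain ⟨x, hxF, hxn⟩ := Finset.exists_of_ssubset hF
    refine Finset.ssubset_iff_of_subset Finset.subset_union_right |>.2 ⟨x, Finset.mem_union_left _ hxF, ?_⟩
    intro hxC
    exact hxn (Finset.mem_inter.2 ⟨hxC, hFB' hxF⟩)
  have h1 : delta G C < delta G (F ∪ C) :=
    h.2 (F ∪ C) hCF (Finset.union_subset (hFB'.trans hB') h.1)
  have h2 := delta_submod G F C
  rw [hFC] at h2
  linarith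

/-- Let `M` be a simple graph and `A, B₁, B₂` finite sets of vertices with
`A ⊆ B₁` and `A ⊆ B₂`. If `B₁` and `B₂` are intrinsic extensions of `A`, then so is
`B₁ ∪ B₂`. -/
theorem stmt_5 {V : Type*} [DecidableEq V] (G : SimpleGraph V) (A B₁ B₂ : Finset V)
    (hA1 : A ⊆ B₁) (hA2 : A ⊆ B₂)
    (h1 : IntrinsicExt G A B₁) (h2 : IntrinsicExt G A B₂) :
    IntrinsicExt G A (B₁ ∪ B₂) := by
  refine ⟨hA1.trans Finset.subset_union_left, ?_⟩
  intro C hAC hC hClosed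
  have key : ∀ B : Finset V, B ⊆ B₁ ∪ B₂ → A ⊆ B → IntrinsicExt G A B → B ⊆ C := by
    intro B hBsub hAB hB
    have hc : Closed G (C ∩ B) B := closed_inter G hBsub hClosed
    by_contra hnot
    have hss : C ∩ B ⊂ B := by
      refine Finset.ssubset_iff_subset_ne.2 ⟨Finset.inter_subset_right, ?_⟩
      intro heq
      exact hnot (heq ▸ Finset.inter_subset_left)
    exact hB.2 (C ∩ B) (Finset.subset_inter hAC hAB) hss hc
  have hb1 := key B₁ Finset.subset_union_left hA1 h1
  have hb2 := key B₂ Finset.subset_union_right hA2 h2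
  exact hC.2 (Finset.union_subset hb1 hb2)
end

section
/- Let M be a forest (a possibly infinite acyclic simple graph), B a finite set of vertices of M, and A ⊆ B such that (A,B) is a minimal pair (with respect to the induced subgraph on B). Then B \ A is a singleton {b}. Moreover: (i) if δ(B) = δ(A), then b has exactly one neighbour in A; (ii) if δ(B) < δ(A), then b has at least two neighbours in A, and b is the unique vertex of M outside A adjacent to all of these neighbours (i.e., M contains exactly one copy of B over A). -/
open SimpleGraph

/-! Write `S = B \ A`. Minimality forces `δ(A ∪ {s}) > δ(A)` and `δ(B \ {s}) > δ(A) ≥ δ(B)` for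
every `s ∈ S` as soon as `|S| ≥ 2`: the first says `s` has no neighbour in `A`, the second that
`s` has at least two neighbours in `B`, hence in `S`. But a finite nonempty forest has a vertex of
degree at most one, so `S = {b}` and `δ(B) = δ(A) + 1 - |N(b) ∩ A|`. Uniqueness of `b` in case (ii)
holds because two vertices with two common neighbours would close a 4-cycle. -/

open Finset

namespace SimpleGraph

variable {V : Type*} {G : SimpleGraph V}

lemma IsAcyclic.exists_forall_adj_eq [Finite V] [Nonempty V] (hG : G.IsAcyclic) :
    ∃ u w : V, ∀ v, G.Adj u v → v = w := by
  -- `u` starts a longest path: a neighbour off the path would extend it, one on it is `p.snd`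
  obtain ⟨u, _, p, hp, hmax⟩ := Walk.exists_isPath_forall_isPath_length_le_length G
  refine ⟨u, p.snd, fun v huv => hG.eq_snd_of_adj_start hp huv ?_⟩
  by_contra hv
  have := hmax _ _ _ (hp.cons (h := huv.symm) hv)
  simp at this

lemma IsAcyclic.exists_mem_forall_adj_eq (hG : G.IsAcyclic) {S : Finset V} (hS : S.Nonempty) :
    ∃ s ∈ S, ∃ w, ∀ a ∈ S, G.Adj s a → a = w := by
  have : Nonempty (S : Set V) := hS.to_subtype
  obtain ⟨u, w, huw⟩ := (hG.induce (S : Set V)).exists_forall_adj_eq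
  exact ⟨u, u.2, w, fun a ha hua => congrArg Subtype.val (huw ⟨a, ha⟩ hua)⟩

lemma IsAcyclic.eq_of_adj_of_adj {a₁ a₂ b b' : V} (hG : G.IsAcyclic) (ha : a₁ ≠ a₂)
    (h₁ : G.Adj b a₁) (h₂ : G.Adj b a₂) (h₁' : G.Adj b' a₁) (h₂' : G.Adj b' a₂) : b' = b := by
  have path_via {c : V} (h₁ : G.Adj c a₁) (h₂ : G.Adj c a₂) :
      ((Walk.nil.cons h₂).cons h₁.symm).IsPath := by
    simp [h₁.ne', h₂.ne, ha]
  have := congrArg (fun p : G.Path a₁ a₂ => p.1.snd)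
    ((hG.subsingleton_path a₁ a₂).elim ⟨_, path_via h₁' h₂'⟩ ⟨_, path_via h₁ h₂⟩)
  simpa using this

variable [DecidableRel G.Adj]

lemma natCard_edgeSet_induce (S : Finset V) :
    Nat.card (G.induce (S : Set V)).edgeSet = #{e ∈ S.sym2 | e ∈ G.edgeSet} := by
  rw [Nat.card_coe_set_eq,
    ← Set.ncard_image_of_injective _ (Sym2.map.injective Subtype.val_injective),
    ← Set.ncard_coe_finset]
  congr 1
  ext e
  induction e using Sym2.ind
  aesop (add simp [Sym2.exists, adj_comm])

lemma card_filter_mem_edgeSet_sym2_insert [DecidableEq V] {b : V} {S : Finset V} (hb : b ∉ S) :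
    #{e ∈ (insert b S).sym2 | e ∈ G.edgeSet} =
      #{e ∈ S.sym2 | e ∈ G.edgeSet} + #{a ∈ S | G.Adj b a} := by
  have hdisj : Disjoint ((insert b S).image (s(b, ·))) S.sym2 := by
    simp [Finset.disjoint_left, hb]
  rw [sym2_insert, filter_union, card_union_of_disjoint (disjoint_filter_filter hdisj), add_comm,
    filter_image, card_image_of_injective _ (fun _ _ => Sym2.congr_right.mp)]
  simp [filter_insert]

end SimpleGraph

section Predimension

variable {V : Type*} {G : SimpleGraph V}

lemma delta_insert [DecidableEq V] [DecidableRel G.Adj] {b : V} {S : Finset V} (hb : b ∉ S) :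
    delta G (insert b S) = delta G S + 1 - #{a ∈ S | G.Adj b a} := by
  rw [delta, delta, natCard_edgeSet_induce, natCard_edgeSet_induce,
    card_filter_mem_edgeSet_sym2_insert hb, card_insert_of_notMem hb]
  push_cast
  ring

namespace MinPair

variable {A B : Finset V}

lemma ssubset (h : MinPair G A B) : A ⊂ B := by
  refine Finset.ssubset_iff_subset_ne.mpr ⟨h.1, ?_⟩
  rintro rfl
  exact h.2.2 ⟨subset_rfl, fun C hAC hCA => absurd hCA hAC.not_subset⟩

lemma delta_lt (h : MinPair G A B) {C : Finset V} (hAC : A ⊂ C) (hCB : C ⊂ B) :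
    delta G A < delta G C :=
  (h.2.1 C hAC.subset hCB).2 C hAC subset_rfl

lemma delta_le (h : MinPair G A B) : delta G B ≤ delta G A := by
  by_contra! hlt
  refine h.2.2 ⟨h.1, fun C hAC hCB => ?_⟩
  obtain rfl | hne := eq_or_ne C B
  · exact hlt
  · exact h.delta_lt hAC (Finset.ssubset_iff_subset_ne.mpr ⟨hCB, hne⟩)

lemma not_adj_of_one_lt_card_sdiff [DecidableEq V] (h : MinPair G A B) (hS : 1 < #(B \ A))
    {s : V} (hs : s ∈ B \ A) {a : V} (ha : a ∈ A) : ¬G.Adj s a := by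
  classical
  obtain ⟨hsB, hsA⟩ := mem_sdiff.mp hs
  obtain ⟨t, ht, hts⟩ := exists_mem_ne hS s
  have hlt := h.delta_lt (ssubset_insert hsA) <|
    (ssubset_iff_of_subset (insert_subset hsB h.1)).mpr
      ⟨t, (mem_sdiff.mp ht).1, by simp [hts, (mem_sdiff.mp ht).2]⟩
  rw [delta_insert hsA] at hlt
  have : #{a ∈ A | G.Adj s a} = 0 := by omega
  exact (filter_eq_empty_iff.mp (card_eq_zero.mp this)) ha

lemma card_sdiff_eq_one [DecidableEq V] (h : MinPair G A B) (hG : G.IsAcyclic) :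
    #(B \ A) = 1 := by
  classical
  have hSne : (B \ A).Nonempty := sdiff_nonempty.mpr h.ssubset.not_subset
  by_contra hS1
  have hS : 1 < #(B \ A) := by
    have := hSne.card_pos
    omega
  obtain ⟨s, hs, w, hw⟩ := hG.exists_mem_forall_adj_eq hSne
  obtain ⟨hsB, hsA⟩ := mem_sdiff.mp hs
  obtain ⟨t, ht, hts⟩ := exists_mem_ne hS s
  have hA : A ⊂ B.erase s := (ssubset_iff_of_subset fun a ha => mem_erase.mpr
    ⟨by rintro rfl; exact hsA ha, h.1 ha⟩).mpr ⟨t, mem_erase.mpr ⟨hts, (mem_sdiff.mp ht).1⟩,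
      (mem_sdiff.mp ht).2⟩
  have hdeg : #{a ∈ B.erase s | G.Adj s a} ≤ 1 := by
    refine card_le_one.mpr fun a ha a' ha' => ?_
    have eq_w {x : V} (hx : x ∈ {a ∈ B.erase s | G.Adj s a}) : x = w := by
      obtain ⟨hxB, hsx⟩ := mem_filter.mp hx
      refine hw x (mem_sdiff.mpr ⟨(mem_erase.mp hxB).2, fun hxA => ?_⟩) hsx
      exact h.not_adj_of_one_lt_card_sdiff hS hs hxA hsx
    rw [eq_w ha, eq_w ha']
  have hδ := delta_insert (G := G) (notMem_erase s B)
  rw [insert_erase hsB] at hδ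
  have := h.delta_lt hA (erase_ssubset hsB)
  have := h.delta_le
  omega

end MinPair

end Predimension

/-- Let `M` be a (possibly infinite) forest, `B` a finite set of vertices
and `A ⊆ B` with `(A,B)` a minimal pair. Then `B \ A` is a singleton `{b}`; moreover
(i) if `δ(B) = δ(A)` then `b` has exactly one neighbour in `A`; (ii) if `δ(B) < δ(A)`
then `b` has at least two neighbours in `A` and `b` is the unique vertex of `M`
outside `A` adjacent to all of these neighbours. -/
theorem stmt_6 {V : Type*} [DecidableEq V] (G : SimpleGraph V) (hG : G.IsAcyclic)
    (A B : Finset V) (h : MinPair G A B) :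
    ∃ b : V, B \ A = {b} ∧
      (delta G B = delta G A → Nat.card {a : V // a ∈ A ∧ G.Adj b a} = 1) ∧
      (delta G B < delta G A →
        2 ≤ Nat.card {a : V // a ∈ A ∧ G.Adj b a} ∧
        ∀ b' : V, b' ∉ A → (∀ a ∈ A, G.Adj b a → G.Adj b' a) → b' = b) := by
  classical
  obtain ⟨b, hb⟩ := card_eq_one.mp (h.card_sdiff_eq_one hG)
  have hbA : b ∉ A := (mem_sdiff.mp (hb ▸ mem_singleton_self b)).2
  have hδ := delta_insert (G := G) hbA
  rw [insert_eq, ← hb, sdiff_union_of_subset h.1] at hδ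
  have hcard : Nat.card {a : V // a ∈ A ∧ G.Adj b a} = #{a ∈ A | G.Adj b a} := by
    rw [← Nat.card_eq_finsetCard]
    exact Nat.card_congr (Equiv.subtypeEquivRight (by simp))
  refine ⟨b, hb, fun heq => by omega, fun hlt => ⟨by omega, fun b' _ hb' => ?_⟩⟩
  obtain ⟨a₁, h₁, a₂, h₂, hne⟩ := one_lt_card.mp (by omega : 1 < #{a ∈ A | G.Adj b a})
  rw [mem_filter] at h₁ h₂
  exact hG.eq_of_adj_of_adj hne h₁.2 h₂.2 (hb' _ h₁.1 h₁.2) (hb' _ h₂.1 h₂.2)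
end

section
/- Let M be a forest (a possibly infinite acyclic simple graph) and A a finite set of vertices of M. Then the weak closure cl_M(A) is a finite set. -/
open SimpleGraph

section Aux
variable {V : Type*} {G : SimpleGraph V} [DecidableEq V]

/-- edge set of induced graph, pushed into `Sym2 V`. -/
private def ES (G : SimpleGraph V) (S : Set V) : Set (Sym2 V) :=
  Sym2.map (Subtype.val) '' (G.induce S).edgeSet

private lemma mem_ES {S : Set V} {x y : V} :
    s(x, y) ∈ ES G S ↔ G.Adj x y ∧ x ∈ S ∧ y ∈ S := by
  constructor
  · rintro ⟨e, he, hmap⟩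
    induction e with
    | _ a b =>
      rw [Sym2.map_pair_eq, Sym2.eq_iff] at hmap
      rw [SimpleGraph.mem_edgeSet] at he
      simp only [comap_adj, Function.Embedding.coe_subtype] at he
      rcases hmap with ⟨hx, hy⟩ | ⟨hy, hx⟩
      · exact ⟨by rw [← hx, ← hy]; exact he, hx ▸ a.2, hy ▸ b.2⟩
      · exact ⟨by rw [← hx, ← hy]; exact he.symm, hx ▸ b.2, hy ▸ a.2⟩
  · rintro ⟨hadj, hx, hy⟩
    exact ⟨s(⟨x, hx⟩, ⟨y, hy⟩), by simpa [SimpleGraph.mem_edgeSet], by simp⟩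

private lemma card_eq_ES (S : Set V) :
    (Nat.card (G.induce S).edgeSet : ℤ) = ((ES G S).ncard : ℤ) := by
  rw [Nat.card_coe_set_eq, ES,
    Set.ncard_image_of_injective _ (Sym2.map.injective Subtype.coe_injective)]

private lemma ES_finite (E : Finset V) : (ES G (E : Set V)).Finite := by
  have : Finite (Sym2 (E : Set V)) := by infer_instance
  exact ((G.induce (E : Set V)).edgeSet.toFinite).image _

private lemma nbr_finite (E : Finset V) (v : V) :
    {w : V | w ∈ E ∧ G.Adj v w}.Finite :=
  E.finite_toSet.subset (fun w hw => hw.1)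

private lemma ES_subset (E : Finset V) (v : V) :
    ES G (E : Set V) ⊆ ES G ((E.erase v : Finset V) : Set V) ∪
      ((fun w => s(v, w)) '' {w : V | w ∈ E ∧ G.Adj v w}) := by
  intro e he
  induction e with
  | _ x y =>
    rw [mem_ES] at he
    obtain ⟨hadj, hx, hy⟩ := he
    by_cases hxv : x = v
    · subst hxv
      exact Or.inr ⟨y, ⟨hy, hadj⟩, rfl⟩
    by_cases hyv : y = v
    · subst hyv
      exact Or.inr ⟨x, ⟨hx, hadj.symm⟩, Sym2.eq_swap⟩
    · refine Or.inl (mem_ES.mpr ⟨hadj, ?_, ?_⟩) <;>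
        simp only [Finset.coe_erase, Set.mem_diff, Set.mem_singleton_iff, Finset.mem_coe] <;>
        tauto

/-- Key degree bound: `e(E) ≤ e(E \ v) + #nbrs(v, E)`. -/
private lemma ES_card_le (E : Finset V) (v : V) :
    (ES G (E : Set V)).ncard ≤ (ES G ((E.erase v : Finset V) : Set V)).ncard +
      {w : V | w ∈ E ∧ G.Adj v w}.ncard := by
  refine le_trans (Set.ncard_le_ncard (ES_subset E v) ?_) ?_
  · exact (ES_finite _).union ((nbr_finite E v).image _)
  · exact le_trans (Set.ncard_union_le _ _)
      (by gcongr; exact Set.ncard_image_le (nbr_finite E v))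

/-- Every vertex of a weakly intrinsic extension outside the base has at least
two neighbours inside the extension. -/
private lemma two_nbrs {A' E : Finset V} (hE : WIntrinsicExt G A' E)
    {v : V} (hv : v ∈ E) (hvA : v ∉ A') :
    ∃ y₁ y₂ : V, y₁ ∈ E ∧ y₂ ∈ E ∧ G.Adj v y₁ ∧ G.Adj v y₂ ∧ y₁ ≠ y₂ := by
  have hsub : A' ⊆ E.erase v := fun a ha =>
    Finset.mem_erase.mpr ⟨fun h => hvA (h ▸ ha), hE.1 ha⟩
  have hss : E.erase v ⊂ E := Finset.erase_ssubset hv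
  have hnc := hE.2 (E.erase v) hsub hss
  rw [WClosed] at hnc
  push_neg at hnc
  obtain ⟨C, hC1, hC2, hC3⟩ := hnc hss.subset
  have hCE : C = E := by
    by_contra hne
    have : C = E.erase v ∨ C = E := by
      by_cases h : v ∈ C
      · right
        apply Finset.Subset.antisymm hC2
        intro w hw
        by_cases hwv : w = v
        · exact hwv ▸ h
        · exact hC1 (Finset.mem_erase.mpr ⟨hwv, hw⟩)
      · left
        apply Finset.Subset.antisymm _ hC1
        intro w hw
        exact Finset.mem_erase.mpr ⟨fun hh => h (hh ▸ hw), hC2 hw⟩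
    rcases this with h | h
    · rw [h] at hC3; exact absurd hC3 (lt_irrefl _)
    · exact hne h
  rw [hCE] at hC3
  rw [delta, delta] at hC3
  have hcard : ((E.erase v).card : ℤ) = (E.card : ℤ) - 1 := by
    rw [Finset.card_erase_of_mem hv]
    have : 1 ≤ E.card := Finset.card_pos.mpr ⟨v, hv⟩
    omega
  rw [hcard] at hC3
  have h2 : (Nat.card (G.induce ((E.erase v : Finset V) : Set V)).edgeSet : ℤ) + 2
      ≤ (Nat.card (G.induce (E : Set V)).edgeSet : ℤ) := by omega
  rw [card_eq_ES, card_eq_ES] at h2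
  have h3 := ES_card_le (G := G) E v
  have h4 : 1 < {w : V | w ∈ E ∧ G.Adj v w}.ncard := by
    have := (Int.ofNat_le.mpr h3)
    push_cast at this
    omega
  obtain ⟨y₁, y₂, ⟨h1, h1'⟩, ⟨hm2, h2'⟩, hne⟩ :=
    (Set.one_lt_ncard_iff (nbr_finite E v)).mp h4
  exact ⟨y₁, y₂, h1, hm2, h1', h2', hne⟩

end Aux


section Aux3
variable {V : Type*} {G : SimpleGraph V}

open SimpleGraph.Walk in
/-- In a path, at most one edge contains the starting vertex. -/
private lemma start_edge_unique {a b y z : V} (p : G.Walk a b) (hp : p.IsPath)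
    (hy : s(a, y) ∈ p.edges) (hz : s(a, z) ∈ p.edges) : y = z := by
  induction p with
  | nil => simp at hy
  | @cons u c w h q ih =>
    rw [edges_cons, List.mem_cons] at hy hz
    have hq := (cons_isPath_iff h q).mp hp
    rcases hy with hy | hy
    · rcases hz with hz | hz
      · rw [← hz] at hy
        exact Sym2.congr_right.mp hy
      · exact absurd (q.fst_mem_support_of_mem_edges hz) hq.2
    · exact absurd (q.fst_mem_support_of_mem_edges hy) hq.2

open SimpleGraph.Walk in
/-- The starting endpoint of a maximal path through `v` inside a weakly intrinsic
extension `E` of `A'` belongs to `A'`. -/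
private lemma endpoint_mem (hG : G.IsAcyclic) {A' E : Finset V} (hE : WIntrinsicExt G A' E)
    {v a b : V} (p : G.Walk a b) (hp : p.IsPath) (hvp : v ∈ p.support)
    (hsup : ∀ z ∈ p.support, z ∈ E)
    (hmax : ∀ (x y : V) (q : G.Walk x y), q.IsPath → v ∈ q.support →
      (∀ z ∈ q.support, z ∈ E) → q.length ≤ p.length) :
    a ∈ A' := by
  classical
  by_contra ha
  have haE : a ∈ E := hsup a p.start_mem_support
  obtain ⟨y₁, y₂, hy₁E, hy₂E, had₁, had₂, hne⟩ := two_nbrs hE haE ha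
  have ext : ∀ y, y ∈ E → G.Adj a y → y ∉ p.support → False := by
    intro y hyE hady hyp
    have hq : (Walk.cons hady.symm p).IsPath :=
      (cons_isPath_iff hady.symm p).mpr ⟨hp, hyp⟩
    have hle := hmax y b (Walk.cons hady.symm p) hq (by simp [hvp]) ?_
    · simp only [length_cons] at hle
      omega
    · intro z hz
      rw [support_cons, List.mem_cons] at hz
      rcases hz with rfl | hz
      · exact hyE
      · exact hsup z hz
  have key : ∀ y (hyp : y ∈ p.support), G.Adj a y → s(a, y) ∈ p.edges := by
    intro y hyp hady
    have hq : (p.takeUntil y hyp).IsPath := hp.takeUntil hyp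
    have hr : (Walk.cons hady Walk.nil : G.Walk a y).IsPath := by
      simp [cons_isPath_iff, hady.ne]
    have hpq := hG.path_unique ⟨p.takeUntil y hyp, hq⟩ ⟨Walk.cons hady Walk.nil, hr⟩
    have heq : p.takeUntil y hyp = Walk.cons hady Walk.nil := congrArg Subtype.val hpq
    have : s(a, y) ∈ (p.takeUntil y hyp).edges := by rw [heq]; simp
    exact p.edges_takeUntil_subset hyp this
  by_cases h₁ : y₁ ∈ p.support
  · by_cases h₂ : y₂ ∈ p.support
    · exact hne (start_edge_unique p hp (key y₁ h₁ had₁) (key y₂ h₂ had₂))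
    · exact ext y₂ hy₂E had₂ h₂
  · exact ext y₁ hy₁E had₁ h₁

end Aux3

/-- Let `M` be a (possibly infinite) forest and `A` a finite set of its
vertices. Then the weak closure `cl_M(A)` is a finite set. -/
theorem stmt_7 {V : Type*} (G : SimpleGraph V) (hG : G.IsAcyclic) (A : Finset V) :
    (clWeak G (A : Set V)).Finite := by
  classical
  have hSfin : (⋃ a ∈ (A : Set V), ⋃ b ∈ (A : Set V),
      {v | ∃ p : G.Walk a b, p.IsPath ∧ v ∈ p.support}).Finite := by
    refine Set.Finite.biUnion A.finite_toSet fun a _ =>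
      Set.Finite.biUnion A.finite_toSet fun b _ => ?_
    by_cases hex : ∃ p : G.Walk a b, p.IsPath
    · obtain ⟨p₀, hp₀⟩ := hex
      refine (List.finite_toSet p₀.support).subset ?_
      rintro v ⟨q, hq, hvq⟩
      have hqe : q = p₀ := congrArg Subtype.val (hG.path_unique ⟨q, hq⟩ ⟨p₀, hp₀⟩)
      rw [hqe] at hvq
      exact hvq
    · refine Set.Finite.subset Set.finite_empty ?_
      rintro v ⟨p, hp, -⟩
      exact absurd ⟨p, hp⟩ hex
  refine hSfin.subset ?_
  rintro v ⟨A', E, hA'A, hE, hvE⟩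
  -- a path through `v` inside `E` of maximal length
  have hW0 : (0 : ℕ) ∈ {n | ∃ (x y : V) (q : G.Walk x y), q.IsPath ∧ v ∈ q.support ∧
      (∀ z ∈ q.support, z ∈ E) ∧ q.length = n} :=
    ⟨v, v, SimpleGraph.Walk.nil, by simp, by simp, by simpa using hvE, by simp⟩
  have hWbdd : BddAbove {n | ∃ (x y : V) (q : G.Walk x y), q.IsPath ∧ v ∈ q.support ∧
      (∀ z ∈ q.support, z ∈ E) ∧ q.length = n} := by
    refine ⟨E.card, fun n hn => ?_⟩
    obtain ⟨x, y, q, hq, -, hsup, rfl⟩ := hn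
    have hsub : q.support.toFinset ⊆ E := fun z hz => hsup z (List.mem_toFinset.mp hz)
    have h1 : q.support.toFinset.card = q.support.length :=
      List.toFinset_card_of_nodup hq.support_nodup
    have h2 : q.support.length = q.length + 1 := q.length_support
    have h3 := Finset.card_le_card hsub
    omega
  obtain ⟨x, y, p, hp, hvp, hsup, hlen⟩ := Nat.sSup_mem ⟨0, hW0⟩ hWbdd
  have hmax : ∀ (x' y' : V) (q : G.Walk x' y'), q.IsPath → v ∈ q.support →
      (∀ z ∈ q.support, z ∈ E) → q.length ≤ p.length := by
    intro x' y' q hq hvq hsq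
    rw [hlen]
    exact le_csSup hWbdd ⟨x', y', q, hq, hvq, hsq, rfl⟩
  have hx : x ∈ A' := endpoint_mem hG hE p hp hvp hsup hmax
  have hy : y ∈ A' := by
    refine endpoint_mem (v := v) hG hE p.reverse hp.reverse
      (by simp [SimpleGraph.Walk.support_reverse, hvp])
      (fun z hz => hsup z (by simpa [SimpleGraph.Walk.support_reverse] using hz)) ?_
    intro x' y' q hq hvq hsq
    rw [SimpleGraph.Walk.length_reverse]
    exact hmax x' y' q hq hvq hsq
  have hxA : x ∈ (A : Set V) := hA'A (by simpa using hx)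
  have hyA : y ∈ (A : Set V) := hA'A (by simpa using hy)
  exact Set.mem_biUnion hxA (Set.mem_biUnion hyA ⟨p, hp, hvp⟩)
end

section
/- Let A ⊆ B be finite forests. Then A is weakly closed in B (A ≤ B) if and only if every path in B between two elements of A is entirely contained in A. -/
open SimpleGraph

/-! If a path in `B` between two points of `A` leaves `A`, then along it every maximal run of
`r` vertices outside `A` is flanked by `r + 1` edges not inside `A`, so adding the path to `A`
gains more edges than vertices and lowers `δ`.

Conversely, suppose `A` contains every path of the forest `B` between its points, and
`A ⊊ C ⊆ B`. Take a longest path in `C` through a vertex outside `A`. Its ends cannot both lie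
in `A`, and an end has all its `C`-neighbours on the path, hence by acyclicity at most one.
Deleting that end from `C` does not increase `δ`, and induction on `C` gives `δ(A) ≤ δ(C)`. -/

open Finset

namespace SimpleGraph

variable {V : Type*} {G : SimpleGraph V}

def inducedEdges (G : SimpleGraph V) [DecidableRel G.Adj] (C : Finset V) : Finset (Sym2 V) :=
  {e ∈ C.sym2 | e ∈ G.edgeSet}

lemma inducedEdges_mono [DecidableRel G.Adj] {C D : Finset V} (h : C ⊆ D) :
    G.inducedEdges C ⊆ G.inducedEdges D :=
  filter_subset_filter _ (sym2_mono h)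

lemma delta_eq_card_sub_card_inducedEdges [DecidableRel G.Adj] (C : Finset V) :
    delta G C = #C - #(G.inducedEdges C) := by
  have himage :
      Sym2.map Subtype.val '' (G.induce (C : Set V)).edgeSet = ↑(G.inducedEdges C) := by
    ext e
    induction e using Sym2.ind with
    | _ a b =>
      simp only [inducedEdges, Set.mem_image, Sym2.exists, mem_coe, mem_filter, mem_sym2_iff,
        Sym2.mem_iff]
      aesop (add simp adj_comm)
  rw [delta, Nat.card_coe_set_eq, ← Set.ncard_image_of_injective _
    (Sym2.map.injective Subtype.val_injective), himage, Set.ncard_coe_finset]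

def PathConvex (G : SimpleGraph V) (A B : Finset V) : Prop :=
  ∀ a a' : V, a ∈ A → a' ∈ A → ∀ p : G.Walk a a', p.IsPath →
    (∀ v ∈ p.support, v ∈ B) → ∀ v ∈ p.support, v ∈ A

lemma PathConvex.mono {A B C : Finset V} (h : PathConvex G A B) (hCB : C ⊆ B) :
    PathConvex G A C :=
  fun a a' ha ha' p hp hpC => h a a' ha ha' p hp fun v hv => hCB (hpC v hv)

lemma Walk.IsPath.subsingleton_neighborSet_end {s : Set V} (hs : (G.induce s).IsAcyclic)
    {x y : V} {p : G.Walk x y} (hp : p.IsPath) (hps : ∀ v ∈ p.support, v ∈ s) :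
    (G.neighborSet y ∩ {u | u ∈ p.support}).Subsingleton := by
  have hq : (p.induce s hps).IsPath :=
    Walk.IsPath.of_map (f := (Embedding.induce s).toHom) (by rwa [Walk.map_induce])
  intro u ⟨hyu, hup⟩ u' ⟨hyu', hu'p⟩
  have h := hs.eq_penultimate_of_adj_end hq (w := ⟨u, hps u hup⟩) (induce_adj.2 hyu)
    (by simpa using hup)
  have h' := hs.eq_penultimate_of_adj_end hq (w := ⟨u', hps u' hu'p⟩) (induce_adj.2 hyu')
    (by simpa using hu'p)
  exact congrArg Subtype.val (h.trans h'.symm)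

lemma exists_inextensible_isPath (C : Finset V) {v : V} (hv : v ∈ C) :
    ∃ (x y : V) (p : G.Walk x y), p.IsPath ∧ (∀ z ∈ p.support, z ∈ C) ∧ v ∈ p.support ∧
      (∀ u ∈ C, G.Adj x u → u ∈ p.support) ∧ (∀ u ∈ C, G.Adj y u → u ∈ p.support) := by
  classical
  let lengths : Set ℕ := {n | ∃ (x y : V) (p : G.Walk x y), p.IsPath ∧
    (∀ z ∈ p.support, z ∈ C) ∧ v ∈ p.support ∧ p.length = n}
  have hbdd : BddAbove lengths := by
    refine ⟨#C, ?_⟩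
    rintro _ ⟨x, y, p, hp, hpC, -, rfl⟩
    have := card_le_card (s := p.support.toFinset) fun z hz => hpC z (List.mem_toFinset.mp hz)
    rw [List.toFinset_card_of_nodup hp.support_nodup, Walk.length_support] at this
    omega
  have hne : lengths.Nonempty := ⟨0, v, v, .nil, .nil, by simpa using hv, by simp, rfl⟩
  obtain ⟨x, y, p, hp, hpC, hvp, hlen⟩ := Nat.sSup_mem hne hbdd
  have hmax : ∀ n ∈ lengths, n ≤ p.length := fun n hn => hlen ▸ le_csSup hbdd hn
  refine ⟨x, y, p, hp, hpC, hvp, fun u hu hxu => ?_, fun u hu hyu => ?_⟩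
  · by_contra hup
    have := hmax _ ⟨u, y, .cons hxu.symm p, hp.cons hup, by simpa [hu] using hpC, by simp [hvp],
      rfl⟩
    simp at this
  · by_contra hup
    have := hmax _ ⟨x, u, p.concat hyu, hp.concat hup hyu,
      by simpa [or_imp, forall_and, hu] using hpC, by simp [Walk.support_concat, hvp], rfl⟩
    simp at this

lemma PathConvex.exists_leaf_not_mem {A C : Finset V} (hC : (G.induce (C : Set V)).IsAcyclic)
    (hconvex : PathConvex G A C) (hCA : ¬ C ⊆ A) :
    ∃ w ∈ C, w ∉ A ∧ ((C : Set V) ∩ G.neighborSet w).Subsingleton := by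
  obtain ⟨v, hvC, hvA⟩ := not_subset.mp hCA
  obtain ⟨x, y, p, hp, hpC, hvp, hx, hy⟩ := exists_inextensible_isPath (G := G) C hvC
  have hleaf : ∀ {x y : V} (p : G.Walk x y), p.IsPath → (∀ z ∈ p.support, z ∈ C) →
      (∀ u ∈ C, G.Adj y u → u ∈ p.support) → ((C : Set V) ∩ G.neighborSet y).Subsingleton :=
    fun p hp hpC hy => (hp.subsingleton_neighborSet_end hC hpC).anti
      fun u ⟨huC, hyu⟩ => ⟨hyu, hy u huC hyu⟩
  by_cases hyA : y ∈ A
  · by_cases hxA : x ∈ A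
    · exact absurd (hconvex x y hxA hyA p hp hpC v hvp) hvA
    · exact ⟨x, hpC x p.start_mem_support, hxA,
        hleaf p.reverse hp.reverse (by simpa using hpC) (by simpa using hx)⟩
  · exact ⟨y, hpC y p.end_mem_support, hyA, hleaf p hp hpC hy⟩

section Counting

variable [DecidableEq V] {A : Finset V}

lemma Walk.countP_support_le_countP_edges {u v : V} (p : G.Walk u v) (hv : v ∈ A) :
    p.support.countP (· ∉ A) ≤ p.edges.countP (· ∉ A.sym2) := by
  induction p with
  | nil => simp [hv]
  | cons h p ih =>
    simp only [support_cons, edges_cons, List.countP_cons, mem_sym2_iff, Sym2.mem_iff]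
    grind

lemma Walk.countP_support_lt_countP_edges {u v : V} (p : G.Walk u v) (hu : u ∈ A) (hv : v ∈ A)
    (hout : ∃ w ∈ p.support, w ∉ A) :
    p.support.countP (· ∉ A) < p.edges.countP (· ∉ A.sym2) := by
  induction p with
  | nil => simp_all
  | @cons u w _ h p ih =>
    simp only [support_cons, edges_cons, List.countP_cons, mem_sym2_iff, Sym2.mem_iff]
    by_cases hw : w ∈ A
    · have := ih hw hv (by simpa [hu] using hout)
      grind
    · have := p.countP_support_le_countP_edges hv
      grind

lemma delta_erase_le {C : Finset V} {w : V} (hw : w ∈ C)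
    (hleaf : ((C : Set V) ∩ G.neighborSet w).Subsingleton) :
    delta G (C.erase w) ≤ delta G C := by
  classical
  have hincident : (G.inducedEdges C \ G.inducedEdges (C.erase w)).card ≤ 1 := by
    have hform : ∀ e ∈ G.inducedEdges C \ G.inducedEdges (C.erase w),
        ∃ u ∈ (C : Set V) ∩ G.neighborSet w, e = s(w, u) := by
      intro e he
      induction e using Sym2.ind with
      | _ a b =>
        simp only [inducedEdges, mem_sdiff, mem_filter, mem_sym2_iff, Sym2.mem_iff, mem_erase,
          forall_eq_or_imp, forall_eq, mem_edgeSet] at he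
        obtain ⟨⟨⟨ha, hb⟩, hab⟩, hnot⟩ := he
        by_cases haw : a = w
        · subst haw
          exact ⟨b, ⟨hb, hab⟩, rfl⟩
        · have hbw : b = w := by tauto
          subst hbw
          exact ⟨a, ⟨ha, hab.symm⟩, Sym2.eq_swap⟩
    refine card_le_one.mpr fun e he f hf => ?_
    obtain ⟨u, hu, rfl⟩ := hform e he
    obtain ⟨u', hu', rfl⟩ := hform f hf
    rw [hleaf hu hu']
  have hedges :=
    card_le_card_sdiff_add_card (s := G.inducedEdges C) (t := G.inducedEdges (C.erase w))
  rw [delta_eq_card_sub_card_inducedEdges, delta_eq_card_sub_card_inducedEdges,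
    card_erase_of_mem hw]
  have := card_pos.mpr ⟨w, hw⟩
  omega

lemma delta_union_support_lt {a a' : V} (p : G.Walk a a') (hp : p.IsPath)
    (ha : a ∈ A) (ha' : a' ∈ A) (hout : ∃ v ∈ p.support, v ∉ A) :
    delta G (A ∪ p.support.toFinset) < delta G A := by
  classical
  have hvertices : #(A ∪ p.support.toFinset) = #A + p.support.countP (· ∉ A) := by
    rw [union_comm, ← card_sdiff_add_card, sdiff_eq_filter, hp.support_nodup.card_eq_countP,
      add_comm]
  have hedges : #(G.inducedEdges A) + p.edges.countP (· ∉ A.sym2) ≤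
      #(G.inducedEdges (A ∪ p.support.toFinset)) := by
    have hdisj : Disjoint (G.inducedEdges A) (p.edges.toFinset.filter (· ∉ A.sym2)) :=
      Finset.disjoint_left.mpr fun _ he he' => (mem_filter.mp he').2 (mem_filter.mp he).1
    have hsub : G.inducedEdges A ∪ p.edges.toFinset.filter (· ∉ A.sym2) ⊆
        G.inducedEdges (A ∪ p.support.toFinset) := by
      refine union_subset (inducedEdges_mono subset_union_left) fun e he => ?_
      have hpe : e ∈ p.edges := List.mem_toFinset.mp (mem_filter.mp he).1
      refine mem_filter.mpr ⟨mem_sym2_iff.mpr fun v hv => ?_, p.edges_subset_edgeSet hpe⟩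
      refine mem_union_right _ (List.mem_toFinset.mpr ?_)
      induction e using Sym2.ind with
      | _ x y =>
        rcases Sym2.mem_iff.mp hv with rfl | rfl
        · exact p.fst_mem_support_of_mem_edges hpe
        · exact p.snd_mem_support_of_mem_edges hpe
    rw [← hp.edges_nodup.card_eq_countP, ← card_union_of_disjoint hdisj]
    exact card_le_card hsub
  have := p.countP_support_lt_countP_edges ha ha' hout
  rw [delta_eq_card_sub_card_inducedEdges, delta_eq_card_sub_card_inducedEdges]
  omega

end Counting

lemma PathConvex.wClosed {A B : Finset V} (hconvex : PathConvex G A B) (hAB : A ⊆ B)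
    (hB : (G.induce (B : Set V)).IsAcyclic) : WClosed G A B := by
  classical
  refine ⟨hAB, fun C hAC hCB => ?_⟩
  induction C using Finset.strongInduction with
  | H C ih =>
    by_cases hCA : C ⊆ A
    · rw [Subset.antisymm hAC hCA]
    · have hC : (G.induce (C : Set V)).IsAcyclic :=
        hB.embedding (G.induceHomOfLE (coe_subset.mpr hCB))
      obtain ⟨w, hwC, hwA, hleaf⟩ := (hconvex.mono hCB).exists_leaf_not_mem hC hCA
      have hAw : A ⊆ C.erase w :=
        fun a ha => mem_erase.mpr ⟨ne_of_mem_of_not_mem ha hwA, hAC ha⟩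
      calc delta G A ≤ delta G (C.erase w) :=
            ih _ (erase_ssubset hwC) hAw ((erase_subset w C).trans hCB)
        _ ≤ delta G C := delta_erase_le hwC hleaf

end SimpleGraph

theorem WClosed.pathConvex {V : Type*} {G : SimpleGraph V} {A B : Finset V}
    (hW : WClosed G A B) : G.PathConvex A B := by
  classical
  intro a a' ha ha' p hp hpB
  by_contra! hout
  have hCB : A ∪ p.support.toFinset ⊆ B :=
    union_subset hW.1 fun v hv => hpB v (List.mem_toFinset.mp hv)
  exact (hW.2 _ subset_union_left hCB).not_gt (delta_union_support_lt p hp ha ha' hout)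

/-- Let `A ⊆ B` be finite forests. Then `A` is weakly closed in `B`
(`A ≤ B`) iff every path in `B` between two elements of `A` is entirely contained
in `A`. -/
theorem stmt_12 {V : Type*} (G : SimpleGraph V) (A B : Finset V)
    (hAB : A ⊆ B) (hB : (G.induce (B : Set V)).IsAcyclic) :
    WClosed G A B ↔
      ∀ a a' : V, a ∈ A → a' ∈ A → ∀ p : G.Walk a a', p.IsPath →
        (∀ v ∈ p.support, v ∈ B) → ∀ v ∈ p.support, v ∈ A :=
  ⟨WClosed.pathConvex, fun hconvex => PathConvex.wClosed hconvex hAB hB⟩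
end

section
/- Let M be a forest (a possibly infinite acyclic simple graph) and ā, b̄ finite sets of vertices of M with b̄ ∩ cl*_M(ā) = ∅. Then cl*_M(ā) ∩ cl*_M(b̄) = ∅, there is no edge of M between cl*_M(ā) and cl*_M(b̄), and cl*_M(ā ∪ b̄) = cl*_M(ā) ∪ cl*_M(b̄) (i.e., the closure of ā ∪ b̄ is the free join of the two closures over the empty set). -/
open SimpleGraph

section Aux

open Finset
open scoped Classical

variable {V : Type*}

/-- Edge count of the induced graph on `A`, as a Finset card. -/
noncomputable def m (G : SimpleGraph V) (A : Finset V) : ℕ :=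
  (A.sym2.filter (fun e => e ∈ G.edgeSet)).card

lemma card_eq (G : SimpleGraph V) (A : Finset V) :
    Nat.card ((G.induce (A : Set V)).edgeSet) = m G A := by
  classical
  have hmem : ∀ e : (G.induce (A : Set V)).edgeSet,
      Sym2.map Subtype.val e.1 ∈ A.sym2.filter (fun e => e ∈ G.edgeSet) := by
    rintro ⟨e, he⟩
    induction e using Sym2.ind with
    | _ a b =>
      rw [SimpleGraph.mem_edgeSet] at he
      have hab : G.Adj a.1 b.1 := he
      simp only [Sym2.map_pair_eq, Finset.mem_filter, Finset.mk_mem_sym2_iff,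
        SimpleGraph.mem_edgeSet]
      exact ⟨⟨a.2, b.2⟩, hab⟩
  let f : (G.induce (A : Set V)).edgeSet →
      {e // e ∈ A.sym2.filter (fun e => e ∈ G.edgeSet)} :=
    fun e => ⟨Sym2.map Subtype.val e.1, hmem e⟩
  have hinj : Function.Injective f := by
    rintro ⟨e₁, h₁⟩ ⟨e₂, h₂⟩ h
    have := congrArg Subtype.val h
    simp only [f] at this
    exact Subtype.ext (Sym2.map.injective Subtype.val_injective this)
  have hsurj : Function.Surjective f := by
    rintro ⟨e, he⟩
    induction e using Sym2.ind with
    | _ a b =>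
      simp only [Finset.mem_filter, Finset.mk_mem_sym2_iff, SimpleGraph.mem_edgeSet] at he
      obtain ⟨⟨ha, hb⟩, hab⟩ := he
      refine ⟨⟨s(⟨a, ha⟩, ⟨b, hb⟩), ?_⟩, ?_⟩
      · rw [SimpleGraph.mem_edgeSet]; exact hab
      · exact Subtype.ext (by simp [f, Sym2.map_pair_eq])
  calc Nat.card ((G.induce (A : Set V)).edgeSet)
      = Nat.card {e // e ∈ A.sym2.filter (fun e => e ∈ G.edgeSet)} :=
        Nat.card_congr (Equiv.ofBijective f ⟨hinj, hsurj⟩)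
    _ = m G A := Nat.card_eq_finsetCard _

/-- Split lemma: if there are no edges between `A` and `B \ A`, edges add up. -/
lemma m_split (G : SimpleGraph V) {A B : Finset V} (hAB : A ⊆ B)
    (hcross : ∀ x ∈ A, ∀ y ∈ B, y ∉ A → ¬ G.Adj x y) :
    m G B = m G A + m G (B \ A) := by
  classical
  have hset : B.sym2.filter (fun e => e ∈ G.edgeSet)
      = (A.sym2.filter (fun e => e ∈ G.edgeSet)) ∪ ((B \ A).sym2.filter (fun e => e ∈ G.edgeSet)) := by
    ext e
    induction e using Sym2.ind with
    | _ x y =>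
      simp only [Finset.mem_filter, Finset.mem_union, Finset.mk_mem_sym2_iff,
        SimpleGraph.mem_edgeSet, Finset.mem_sdiff]
      constructor
      · rintro ⟨⟨hx, hy⟩, hadj⟩
        by_cases hxA : x ∈ A <;> by_cases hyA : y ∈ A
        · exact Or.inl ⟨⟨hxA, hyA⟩, hadj⟩
        · exact absurd hadj (hcross x hxA y hy hyA)
        · exact absurd hadj.symm (hcross y hyA x hx hxA)
        · exact Or.inr ⟨⟨⟨hx, hxA⟩, ⟨hy, hyA⟩⟩, hadj⟩
      · rintro (⟨⟨hx, hy⟩, hadj⟩ | ⟨⟨⟨hx, _⟩, ⟨hy, _⟩⟩, hadj⟩)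
        · exact ⟨⟨hAB hx, hAB hy⟩, hadj⟩
        · exact ⟨⟨hx, hy⟩, hadj⟩
  have hdisj : Disjoint (A.sym2.filter (fun e => e ∈ G.edgeSet))
      ((B \ A).sym2.filter (fun e => e ∈ G.edgeSet)) := by
    rw [Finset.disjoint_left]
    intro e he1 he2
    induction e using Sym2.ind with
    | _ x y =>
      simp only [Finset.mem_filter, Finset.mk_mem_sym2_iff, Finset.mem_sdiff] at he1 he2
      exact he2.1.1.2 he1.1.1
  rw [m, hset, Finset.card_union_of_disjoint hdisj]; rfl

/-- Adding a vertex with a neighbour strictly increases the edge count. -/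
lemma m_insert_lt (G : SimpleGraph V) {C : Finset V} {x y : V}
    (hx : x ∈ C) (hy : y ∉ C) (hadj : G.Adj x y) :
    m G C < m G (insert y C) := by
  classical
  apply Finset.card_lt_card
  rw [Finset.ssubset_iff_of_subset (Finset.filter_subset_filter _ (Finset.sym2_mono (Finset.subset_insert y C)))]
  refine ⟨s(x, y), ?_, ?_⟩
  · simp only [Finset.mem_filter, Finset.mk_mem_sym2_iff, SimpleGraph.mem_edgeSet]
    exact ⟨⟨Finset.mem_insert_of_mem hx, Finset.mem_insert_self y C⟩, hadj⟩
  · simp only [Finset.mem_filter, Finset.mk_mem_sym2_iff]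
    rintro ⟨⟨-, hyC⟩, -⟩
    exact hy hyC

/-- Removing a vertex with at most one neighbour drops the edge count by at most 1. -/
lemma m_erase (G : SimpleGraph V) {A : Finset V} {v w : V}
    (huniq : ∀ z ∈ A, G.Adj v z → z = w) :
    m G A ≤ m G (A.erase v) + 1 := by
  classical
  have hsub : A.sym2.filter (fun e => e ∈ G.edgeSet)
      ⊆ ((A.erase v).sym2.filter (fun e => e ∈ G.edgeSet)) ∪ {s(v, w)} := by
    intro e he
    induction e using Sym2.ind with
    | _ x y =>
      simp only [Finset.mem_filter, Finset.mk_mem_sym2_iff, SimpleGraph.mem_edgeSet] at he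
      obtain ⟨⟨hx, hy⟩, hadj⟩ := he
      simp only [Finset.mem_union, Finset.mem_filter, Finset.mk_mem_sym2_iff,
        SimpleGraph.mem_edgeSet, Finset.mem_erase, Finset.mem_singleton]
      by_cases hxv : x = v
      · subst hxv
        right
        rw [huniq y hy hadj]
      · by_cases hyv : y = v
        · subst hyv
          right
          rw [huniq x hx hadj.symm, Sym2.eq_swap]
        · exact Or.inl ⟨⟨⟨hxv, hx⟩, ⟨hyv, hy⟩⟩, hadj⟩
  calc m G A ≤ (((A.erase v).sym2.filter (fun e => e ∈ G.edgeSet)) ∪ {s(v, w)}).card :=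
        Finset.card_le_card hsub
    _ ≤ m G (A.erase v) + 1 := by
        refine (Finset.card_union_le _ _).trans ?_
        simp [m]

/-- Any path with support in `A` has length < `A.card`. -/
lemma path_length_lt {G : SimpleGraph V} {A : Finset V} {u v : V} {p : G.Walk u v}
    (hp : p.IsPath) (hsupp : p.support.toFinset ⊆ A) : p.length + 1 ≤ A.card := by
  classical
  have h1 : p.support.toFinset.card = p.support.length :=
    List.toFinset_card_of_nodup hp.support_nodup
  have h2 : p.support.length = p.length + 1 := SimpleGraph.Walk.length_support p
  calc p.length + 1 = p.support.toFinset.card := by rw [h1, h2]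
    _ ≤ A.card := Finset.card_le_card hsupp

/-- In an acyclic graph, any finite set containing an edge contains a "leaf":
a vertex all of whose neighbours in the whole graph coincide. -/
lemma exists_leaf {G : SimpleGraph V} (hG : G.IsAcyclic) (A : Finset V) {x y : V}
    (hx : x ∈ A) (hy : y ∈ A) (hxy : G.Adj x y) :
    ∃ v ∈ A, ∃ w ∈ A, G.Adj v w ∧ ∀ z ∈ A, G.Adj v z → z = w := by
  classical
  set Q : ℕ → Prop := fun n => ∃ (u v : V) (p : G.Walk u v),
    p.IsPath ∧ p.support.toFinset ⊆ A ∧ p.length = n with hQ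
  have hQ1 : Q 1 := by
    refine ⟨x, y, .cons hxy .nil, ?_, ?_, rfl⟩
    · simp [SimpleGraph.Walk.cons_isPath_iff, hxy.ne]
    · intro z hz
      simp only [SimpleGraph.Walk.support_cons, SimpleGraph.Walk.support_nil,
        List.toFinset_cons, List.toFinset_nil, Finset.mem_insert] at hz
      rcases hz with h | h
      · exact h ▸ hx
      · have : z = y := by simpa using h
        exact this ▸ hy
  have hcard : 1 ≤ A.card := Finset.card_pos.2 ⟨x, hx⟩
  set n := Nat.findGreatest Q A.card with hn
  have hn1 : 1 ≤ n := Nat.le_findGreatest hcard hQ1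
  obtain ⟨u, v, p, hp, hsupp, hlen⟩ : Q n := Nat.findGreatest_spec hcard hQ1
  have hmax : ∀ (u' v' : V) (p' : G.Walk u' v'), p'.IsPath → p'.support.toFinset ⊆ A →
      p'.length ≤ n := by
    intro u' v' p' hp' hsupp'
    by_contra hlt
    push_neg at hlt
    exact Nat.findGreatest_is_greatest hlt (Nat.le_of_succ_le (path_length_lt hp' hsupp'))
      ⟨u', v', p', hp', hsupp', rfl⟩
  -- reverse the path; v is the leaf
  set q := p.reverse with hq
  have hqp : q.IsPath := hp.reverse
  have hqsupp : q.support.toFinset ⊆ A := by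
    intro z hz
    apply hsupp
    simp only [List.mem_toFinset, hq, SimpleGraph.Walk.support_reverse, List.mem_reverse] at hz ⊢
    exact hz
  have hqlen : q.length = n := by rw [hq, SimpleGraph.Walk.length_reverse, hlen]
  have hvA : v ∈ A := hqsupp (by simp [SimpleGraph.Walk.start_mem_support])
  set w := q.getVert 1 with hw
  have hadjvw : G.Adj v w := by
    have := q.adj_getVert_succ (i := 0) (by omega)
    rwa [SimpleGraph.Walk.getVert_zero] at this
  have hwA : w ∈ A := hqsupp (List.mem_toFinset.2 (SimpleGraph.Walk.mem_support_iff_exists_getVert.2 ⟨1, rfl, by omega⟩))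
  refine ⟨v, hvA, w, hwA, hadjvw, ?_⟩
  intro z hzA hvz
  by_cases hzsupp : z ∈ q.support
  · -- build path from v to z inside q; by uniqueness it is the single edge
    have hr : (q.takeUntil z hzsupp).IsPath := hqp.takeUntil hzsupp
    have hs : (SimpleGraph.Walk.cons hvz .nil : G.Walk v z).IsPath := by
      simp [SimpleGraph.Walk.cons_isPath_iff, hvz.ne]
    have huniq := (isAcyclic_iff_path_unique.mp hG) ⟨q.takeUntil z hzsupp, hr⟩ ⟨.cons hvz .nil, hs⟩
    have hreq : q.takeUntil z hzsupp = SimpleGraph.Walk.cons hvz .nil :=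
      congrArg Subtype.val huniq
    have hspec := q.take_spec hzsupp
    rw [hreq] at hspec
    have : q.getVert 1 = z := by
      rw [← hspec]
      simp [SimpleGraph.Walk.getVert_cons_succ, SimpleGraph.Walk.getVert_zero]
    rw [← this, hw]
  · -- extend the path: contradiction with maximality
    exfalso
    have hr : (SimpleGraph.Walk.cons hvz.symm q).IsPath :=
      (SimpleGraph.Walk.cons_isPath_iff _ _).2 ⟨hqp, hzsupp⟩
    have hrsupp : (SimpleGraph.Walk.cons hvz.symm q).support.toFinset ⊆ A := by
      intro t ht
      simp only [SimpleGraph.Walk.support_cons, List.toFinset_cons, Finset.mem_insert,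
        List.mem_toFinset] at ht
      rcases ht with h | h
      · exact h ▸ hzA
      · exact hqsupp (List.mem_toFinset.2 h)
    have := hmax _ _ _ hr hrsupp
    simp only [SimpleGraph.Walk.length_cons, hqlen] at this
    omega

/-- Forest bound: a finite forest on a nonempty set has at most `card - 1` edges. -/
lemma forest_bound {G : SimpleGraph V} (hG : G.IsAcyclic) (A : Finset V) (hA : A.Nonempty) :
    m G A + 1 ≤ A.card := by
  classical
  induction A using Finset.strongInduction with
  | _ A ih =>
    by_cases h0 : m G A = 0
    · rw [h0]
      exact Finset.card_pos.2 hA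
    · obtain ⟨e, he⟩ := Finset.card_ne_zero.mp h0
      have hedge : ∃ x ∈ A, ∃ y ∈ A, G.Adj x y := by
        induction e using Sym2.ind with
        | _ x y =>
          simp only [Finset.mem_filter, Finset.mk_mem_sym2_iff, SimpleGraph.mem_edgeSet] at he
          exact ⟨x, he.1.1, y, he.1.2, he.2⟩
      obtain ⟨x, hx, y, hy, hxy⟩ := hedge
      obtain ⟨v, hv, w, hw, hvw, huniq⟩ := exists_leaf hG A hx hy hxy
      have hwv : w ∈ A.erase v := Finset.mem_erase.2 ⟨hvw.ne', hw⟩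
      have hss : A.erase v ⊂ A := Finset.erase_ssubset hv
      have hrec := ih (A.erase v) hss ⟨w, hwv⟩
      have h1 := m_erase G huniq
      have h2 : (A.erase v).card = A.card - 1 := Finset.card_erase_of_mem hv
      have h3 : 1 ≤ A.card := Finset.card_pos.2 hA
      omega

lemma delta_eq (G : SimpleGraph V) (A : Finset V) :
    delta G A = (A.card : ℤ) - (m G A : ℤ) := by
  rw [delta, card_eq]

/-- L1: if there is no edge from `C` to `E \ C`, then `C` is closed in `E` (for forests). -/
lemma closed_of_no_cross {G : SimpleGraph V} (hG : G.IsAcyclic) {C E : Finset V}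
    (hCE : C ⊆ E) (hcross : ∀ x ∈ C, ∀ y ∈ E, y ∉ C → ¬ G.Adj x y) :
    Closed G C E := by
  refine ⟨hCE, fun C' hss hsub => ?_⟩
  have hsplit : m G C' = m G C + m G (C' \ C) :=
    m_split G hss.1 (fun x hx y hy hyn => hcross x hx y (hsub hy) hyn)
  have hSne : (C' \ C).Nonempty := by
    obtain ⟨t, ht, htn⟩ := Finset.exists_of_ssubset hss
    exact ⟨t, Finset.mem_sdiff.2 ⟨ht, htn⟩⟩
  have hfb := forest_bound hG (C' \ C) hSne
  have hcards : (C' \ C).card + C.card = C'.card :=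
    Finset.card_sdiff_add_card_eq_card hss.1
  rw [delta_eq, delta_eq]
  omega

/-- Boundary edge along a walk. -/
lemma exists_boundary {G : SimpleGraph V} {u w : V} (p : G.Walk u w) (C : Finset V)
    (hu : u ∈ C) (hw : w ∉ C) :
    ∃ x y, x ∈ C ∧ y ∉ C ∧ y ∈ p.support ∧ G.Adj x y := by
  induction p with
  | nil => exact absurd hu hw
  | @cons a b c h q ih =>
    by_cases hb : b ∈ C
    · obtain ⟨x, y, hx, hy, hysupp, hadj⟩ := ih hb hw
      exact ⟨x, y, hx, hy, by simp [SimpleGraph.Walk.support_cons, hysupp], hadj⟩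
    · exact ⟨a, b, hu, hb, by simp [SimpleGraph.Walk.support_cons,
        SimpleGraph.Walk.start_mem_support], h⟩

/-- Characterization of the closure in a forest: reachability. -/
lemma mem_clStar_iff {G : SimpleGraph V} (hG : G.IsAcyclic) (N : Set V) (b : V) :
    b ∈ clStar G N ↔ ∃ n ∈ N, G.Reachable n b := by
  constructor
  · rintro ⟨A, E, hAN, ⟨hAE, hIE⟩, hbE⟩
    by_contra hno
    push_neg at hno
    set C := E.filter (fun v => ¬ G.Reachable v b) with hC
    have hAC : A ⊆ C := by
      intro a ha
      refine Finset.mem_filter.2 ⟨hAE ha, hno a (hAN ha)⟩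
    have hCE : C ⊂ E := by
      refine Finset.ssubset_iff_of_subset (Finset.filter_subset _ _) |>.2 ⟨b, hbE, ?_⟩
      simp only [hC, Finset.mem_filter, not_and, not_not]
      exact fun _ => SimpleGraph.Reachable.refl b
    refine hIE C hAC hCE (closed_of_no_cross hG (Finset.filter_subset _ _) ?_)
    intro x hx y hy hyn hadj
    have hxr : ¬ G.Reachable x b := (Finset.mem_filter.1 hx).2
    have hyr : G.Reachable y b := by
      by_contra hyr
      exact hyn (Finset.mem_filter.2 ⟨hy, hyr⟩)
    exact hxr (hadj.reachable.trans hyr)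
  · rintro ⟨n, hnN, hr⟩
    obtain ⟨p⟩ := hr
    refine ⟨{n}, p.support.toFinset, by simpa using hnN, ⟨?_, ?_⟩, ?_⟩
    · simpa using p.start_mem_support
    · intro C hnC hCE hclosed
      obtain ⟨v, hvE, hvC⟩ := Finset.exists_of_ssubset hCE
      have hvsupp : v ∈ p.support := List.mem_toFinset.1 hvE
      have hnCmem : n ∈ C := hnC (Finset.mem_singleton_self n)
      obtain ⟨x, y, hx, hy, hysupp, hadj⟩ :=
        exists_boundary (p.takeUntil v hvsupp) C hnCmem hvC
      have hyE : y ∈ p.support.toFinset :=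
        List.mem_toFinset.2 (p.support_takeUntil_subset hvsupp hysupp)
      have hlt := hclosed.2 (insert y C) (Finset.ssubset_insert hy)
        (Finset.insert_subset hyE hCE.1)
      rw [delta_eq, delta_eq] at hlt
      have hm := m_insert_lt G hx hy hadj
      have hcard : (insert y C).card = C.card + 1 := Finset.card_insert_of_notMem hy
      omega
    · exact List.mem_toFinset.2 p.end_mem_support


end Aux

/-- Let `M` be a (possibly infinite) forest and `ā, b̄` finite sets of
vertices with `b̄ ∩ cl*_M(ā) = ∅`. Then the closures of `ā` and `b̄` are disjoint,
there is no edge between them, and `cl*_M(ā ∪ b̄) = cl*_M(ā) ∪ cl*_M(b̄)` (the free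
join of the two closures over the empty set). -/
theorem stmt_16 {V : Type*} (G : SimpleGraph V) (hG : G.IsAcyclic)
    (abar bbar : Finset V)
    (h : (bbar : Set V) ∩ clStar G (abar : Set V) = ∅) :
    clStar G (abar : Set V) ∩ clStar G (bbar : Set V) = ∅ ∧
    (∀ x ∈ clStar G (abar : Set V), ∀ y ∈ clStar G (bbar : Set V), ¬ G.Adj x y) ∧
    clStar G ((abar : Set V) ∪ (bbar : Set V)) =
      clStar G (abar : Set V) ∪ clStar G (bbar : Set V) := by
  have key : ∀ b ∈ bbar, ∀ a ∈ abar, ¬ G.Reachable a b := by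
    intro b hb a ha hr
    have hbmem : (b : V) ∈ (bbar : Set V) ∩ clStar G (abar : Set V) :=
      ⟨hb, (mem_clStar_iff hG _ b).2 ⟨a, ha, hr⟩⟩
    rw [h] at hbmem
    exact hbmem
  refine ⟨?_, ?_, ?_⟩
  · ext x
    simp only [Set.mem_inter_iff, Set.mem_empty_iff_false, iff_false, not_and]
    intro hxa hxb
    obtain ⟨a, ha, hra⟩ := (mem_clStar_iff hG _ x).1 hxa
    obtain ⟨b, hb, hrb⟩ := (mem_clStar_iff hG _ x).1 hxb
    exact key b hb a ha (hra.trans hrb.symm)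
  · intro x hx y hy hadj
    obtain ⟨a, ha, hra⟩ := (mem_clStar_iff hG _ x).1 hx
    obtain ⟨b, hb, hrb⟩ := (mem_clStar_iff hG _ y).1 hy
    exact key b hb a ha ((hra.trans hadj.reachable).trans hrb.symm)
  · ext x
    rw [Set.mem_union, mem_clStar_iff hG, mem_clStar_iff hG, mem_clStar_iff hG]
    constructor
    · rintro ⟨n, hn, hr⟩
      rcases hn with hn | hn
      · exact Or.inl ⟨n, hn, hr⟩
      · exact Or.inr ⟨n, hn, hr⟩
    · rintro (⟨n, hn, hr⟩ | ⟨n, hn, hr⟩)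
      · exact ⟨n, Or.inl hn, hr⟩
      · exact ⟨n, Or.inr hn, hr⟩
end
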